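/- For any fixed vector c ∈ ℝ³ and any x ∈ ℝ³ with x ≠ 0, the function Φ_c(x) = (1/(4π‖x‖)) · exp((1/2)(⟨c,x⟩ − ‖c‖‖x‖)) satisfies the anisotropic equation ΔΦ_c(x) − ⟨c, ∇Φ_c(x)⟩ = 0. -/

import Mathlib

open RealInnerProductSpace

noncomputable def Phi (c x : EuclideanSpace ℝ (Fin 3)) : ℝ :=
  (1 / (4 * Real.pi * ‖x‖)) * Real.exp ((1 / 2) * (⟪c, x⟫ - ‖c‖ * ‖x‖))

noncomputable def lap (f : EuclideanSpace ℝ (Fin 3) → ℝ) (x : EuclideanSpace ℝ (Fin 3)) : ℝ :=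
  ∑ i : Fin 3, fderiv ℝ (fun y => fderiv ℝ f y (EuclideanSpace.single i 1)) x
    (EuclideanSpace.single i 1)

lemma normDeriv {y : EuclideanSpace ℝ (Fin 3)} (hy : y ≠ 0) :
    HasFDerivAt (fun z : EuclideanSpace ℝ (Fin 3) => ‖z‖) (‖y‖⁻¹ • innerSL ℝ y) y := by
  have hr : ‖y‖ ≠ 0 := norm_ne_zero_iff.2 hy
  have h1 : HasFDerivAt (fun z : EuclideanSpace ℝ (Fin 3) => ‖z‖ ^ 2) (2 • innerSL ℝ y) y :=
    (hasStrictFDerivAt_norm_sq y).hasFDerivAt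
  have hsq : ‖y‖ ^ 2 ≠ 0 := pow_ne_zero 2 hr
  have h2 := (Real.hasDerivAt_sqrt hsq).comp_hasFDerivAt y h1
  have h3 : (fun z : EuclideanSpace ℝ (Fin 3) => Real.sqrt (‖z‖ ^ 2)) = fun z => ‖z‖ := by
    funext z; rw [Real.sqrt_sq (norm_nonneg z)]
  rw [Function.comp_def, h3] at h2
  have h4 : (1 / (2 * Real.sqrt (‖y‖ ^ 2))) • (2 • innerSL ℝ y) = ‖y‖⁻¹ • innerSL ℝ y := by
    ext v
    rw [Real.sqrt_sq (norm_nonneg y)]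
    simp only [ContinuousLinearMap.smul_apply, smul_eq_mul, ContinuousLinearMap.coe_smul',
      Pi.smul_apply, nsmul_eq_mul, Nat.cast_ofNat]
    field_simp
  rwa [h4] at h2

lemma phiDeriv (c : EuclideanSpace ℝ (Fin 3)) {y : EuclideanSpace ℝ (Fin 3)} (hy : y ≠ 0) :
    HasFDerivAt (Phi c)
      ((Phi c y / 2) • innerSL ℝ c
        + (-(Phi c y) * (‖y‖⁻¹ ^ 2 + ‖c‖ * ‖y‖⁻¹ / 2)) • innerSL ℝ y) y := by
  have hr : ‖y‖ ≠ 0 := norm_ne_zero_iff.2 hy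
  have hπ : Real.pi ≠ 0 := Real.pi_ne_zero
  have hn := normDeriv hy
  have hB : HasFDerivAt (fun z : EuclideanSpace ℝ (Fin 3) => (1 / 2 : ℝ) * (⟪c, z⟫ - ‖c‖ * ‖z‖))
      ((1 / 2 : ℝ) • ((innerSL ℝ c) - ‖c‖ • (‖y‖⁻¹ • innerSL ℝ y))) y :=
    (((innerSL ℝ c).hasFDerivAt).sub (hn.const_mul ‖c‖)).const_mul (1 / 2)
  have hE := hB.exp
  have h4 : HasFDerivAt (fun z : EuclideanSpace ℝ (Fin 3) => 4 * Real.pi * ‖z‖)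
      ((4 * Real.pi) • (‖y‖⁻¹ • innerSL ℝ y)) y := hn.const_mul (4 * Real.pi)
  have h4y : 4 * Real.pi * ‖y‖ ≠ 0 := by positivity
  have hAinv := (hasDerivAt_inv h4y).comp_hasFDerivAt y h4
  have hA : HasFDerivAt (fun z : EuclideanSpace ℝ (Fin 3) => 1 / (4 * Real.pi * ‖z‖))
      ((-((4 * Real.pi * ‖y‖) ^ 2)⁻¹) • ((4 * Real.pi) • (‖y‖⁻¹ • innerSL ℝ y))) y := by
    simpa [Function.comp_def, one_div] using hAinv
  have hP := hA.mul hE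
  have heq : ((fun z : EuclideanSpace ℝ (Fin 3) => 1 / (4 * Real.pi * ‖z‖)) *
      fun z => Real.exp ((1 / 2 : ℝ) * (⟪c, z⟫ - ‖c‖ * ‖z‖))) = Phi c := rfl
  rw [heq] at hP
  have hcoef : (1 / (4 * Real.pi * ‖y‖)) •
        (Real.exp ((1 / 2 : ℝ) * (⟪c, y⟫ - ‖c‖ * ‖y‖)) •
          ((1 / 2 : ℝ) • ((innerSL ℝ c) - ‖c‖ • (‖y‖⁻¹ • innerSL ℝ y))))
      + Real.exp ((1 / 2 : ℝ) * (⟪c, y⟫ - ‖c‖ * ‖y‖)) •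
        ((-((4 * Real.pi * ‖y‖) ^ 2)⁻¹) • ((4 * Real.pi) • (‖y‖⁻¹ • innerSL ℝ y)))
      = (Phi c y / 2) • innerSL ℝ c
        + (-(Phi c y) * (‖y‖⁻¹ ^ 2 + ‖c‖ * ‖y‖⁻¹ / 2)) • innerSL ℝ y := by
    ext v
    simp only [ContinuousLinearMap.add_apply, ContinuousLinearMap.smul_apply,
      ContinuousLinearMap.coe_smul', Pi.smul_apply, ContinuousLinearMap.coe_sub', Pi.sub_apply,
      smul_eq_mul, Phi]
    field_simp
    ring
  rw [hcoef] at hP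
  exact hP

lemma ninvDeriv {x : EuclideanSpace ℝ (Fin 3)} (hx : x ≠ 0) :
    HasFDerivAt (fun z : EuclideanSpace ℝ (Fin 3) => ‖z‖⁻¹)
      ((-(‖x‖ ^ 2)⁻¹) • (‖x‖⁻¹ • innerSL ℝ x)) x := by
  have hr : ‖x‖ ≠ 0 := norm_ne_zero_iff.2 hx
  simpa [Function.comp_def] using (hasDerivAt_inv hr).comp_hasFDerivAt x (normDeriv hx)

lemma secondDeriv (c : EuclideanSpace ℝ (Fin 3)) {x : EuclideanSpace ℝ (Fin 3)} (hx : x ≠ 0)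
    (v : EuclideanSpace ℝ (Fin 3)) :
    fderiv ℝ (fun y => fderiv ℝ (Phi c) y v) x v =
      (Phi c x / 4) * (⟪c, v⟫ * ⟪c, v⟫)
      + (-(Phi c x) * (‖x‖⁻¹ * ‖x‖⁻¹ + ‖c‖ * ‖x‖⁻¹ / 2)) * (⟪c, v⟫ * ⟪x, v⟫)
      + ((Phi c x) * ((‖x‖⁻¹ * ‖x‖⁻¹ + ‖c‖ * ‖x‖⁻¹ / 2) ^ 2
          + ‖x‖⁻¹ ^ 3 * (2 * ‖x‖⁻¹ + ‖c‖ / 2))) * (⟪x, v⟫ * ⟪x, v⟫)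
      + (-(Phi c x) * (‖x‖⁻¹ * ‖x‖⁻¹ + ‖c‖ * ‖x‖⁻¹ / 2)) * ⟪v, v⟫ := by
  have hr : ‖x‖ ≠ 0 := norm_ne_zero_iff.2 hx
  have hev : (fun y => fderiv ℝ (Phi c) y v) =ᶠ[nhds x]
      (fun y => Phi c y * (⟪c, v⟫ / 2)
        + -(Phi c y) * (‖y‖⁻¹ * ‖y‖⁻¹ + ‖c‖ / 2 * ‖y‖⁻¹) * ⟪v, y⟫) := by
    filter_upwards [eventually_ne_nhds hx] with y hy
    rw [(phiDeriv c hy).fderiv]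
    simp only [ContinuousLinearMap.add_apply, ContinuousLinearMap.smul_apply, smul_eq_mul,
      innerSL_apply_apply]
    rw [real_inner_comm v y]
    ring
  rw [hev.fderiv_eq]
  have hP := phiDeriv c hx
  have hni := ninvDeriv hx
  have hG := (hP.mul_const ((⟪c, v⟫ : ℝ) / 2)).add
    (((hP.neg.mul ((hni.mul hni).add (hni.const_mul (‖c‖ / 2)))).mul
      ((innerSL ℝ v).hasFDerivAt)))
  have hG' : HasFDerivAt (fun y : EuclideanSpace ℝ (Fin 3) => Phi c y * (⟪c, v⟫ / 2)
      + -(Phi c y) * (‖y‖⁻¹ * ‖y‖⁻¹ + ‖c‖ / 2 * ‖y‖⁻¹) * ⟪v, y⟫) _ x := hG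
  rw [hG'.fderiv]
  simp only [ContinuousLinearMap.add_apply, ContinuousLinearMap.smul_apply,
    ContinuousLinearMap.coe_smul', Pi.smul_apply, ContinuousLinearMap.coe_sub', Pi.sub_apply,
    smul_eq_mul, innerSL_apply_apply, ContinuousLinearMap.neg_apply, ContinuousLinearMap.coe_mul,
    Pi.add_apply, ContinuousLinearMap.coe_add', Pi.neg_apply, Pi.mul_apply]
  rw [real_inner_comm v x]
  field_simp
  ring

lemma sum3 (F1 F2 F3 F4 : ℝ) (c x : EuclideanSpace ℝ (Fin 3)) :
    (∑ i : Fin 3, (F1 * (⟪c, EuclideanSpace.single i 1⟫ * ⟪c, EuclideanSpace.single i 1⟫)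
      + F2 * (⟪c, EuclideanSpace.single i 1⟫ * ⟪x, EuclideanSpace.single i 1⟫)
      + F3 * (⟪x, EuclideanSpace.single i 1⟫ * ⟪x, EuclideanSpace.single i 1⟫)
      + F4 * ⟪EuclideanSpace.single i (1:ℝ), EuclideanSpace.single i 1⟫))
    = F1 * (‖c‖ * ‖c‖) + F2 * ⟪c, x⟫ + F3 * (‖x‖ * ‖x‖) + F4 * 3 := by
  have hc : ∀ (w : EuclideanSpace ℝ (Fin 3)) (i : Fin 3),
      ⟪w, EuclideanSpace.single i (1:ℝ)⟫ = w i := by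
    intro w i; simp [EuclideanSpace.inner_single_right]
  rw [← real_inner_self_eq_norm_mul_norm, ← real_inner_self_eq_norm_mul_norm]
  simp only [hc, PiLp.inner_apply, RCLike.inner_apply, conj_trivial, EuclideanSpace.single_apply]
  simp [Fin.sum_univ_three]
  ring

theorem anisotropic_fundamental_solution (c : EuclideanSpace ℝ (Fin 3))
    (x : EuclideanSpace ℝ (Fin 3)) (hx : x ≠ 0) :
    lap (Phi c) x - ⟪c, gradient (Phi c) x⟫ = 0 := by
  have hr : ‖x‖ ≠ 0 := norm_ne_zero_iff.2 hx
  have h1 : lap (Phi c) x = ∑ i : Fin 3,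
      ((Phi c x / 4) * (⟪c, EuclideanSpace.single i 1⟫ * ⟪c, EuclideanSpace.single i 1⟫)
      + (-(Phi c x) * (‖x‖⁻¹ * ‖x‖⁻¹ + ‖c‖ * ‖x‖⁻¹ / 2)) *
          (⟪c, EuclideanSpace.single i 1⟫ * ⟪x, EuclideanSpace.single i 1⟫)
      + ((Phi c x) * ((‖x‖⁻¹ * ‖x‖⁻¹ + ‖c‖ * ‖x‖⁻¹ / 2) ^ 2
          + ‖x‖⁻¹ ^ 3 * (2 * ‖x‖⁻¹ + ‖c‖ / 2))) *
          (⟪x, EuclideanSpace.single i 1⟫ * ⟪x, EuclideanSpace.single i 1⟫)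
      + (-(Phi c x) * (‖x‖⁻¹ * ‖x‖⁻¹ + ‖c‖ * ‖x‖⁻¹ / 2)) *
          ⟪EuclideanSpace.single i (1:ℝ), EuclideanSpace.single i 1⟫) :=
    Finset.sum_congr rfl fun i _ => secondDeriv c hx _
  have hgrad : ⟪c, gradient (Phi c) x⟫ = Phi c x / 2 * ⟪c, c⟫
      + (-(Phi c x) * (‖x‖⁻¹ ^ 2 + ‖c‖ * ‖x‖⁻¹ / 2)) * ⟪x, c⟫ := by
    rw [real_inner_comm, gradient, InnerProductSpace.toDual_symm_apply, (phiDeriv c hx).fderiv]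
    simp [innerSL_apply_apply]
  rw [h1, sum3, hgrad, real_inner_self_eq_norm_mul_norm, real_inner_comm x c]
  field_simp
  ring
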